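/- A linear operator ∇ on π₃ is a local derivation of π₃ if and only if there exist complex numbers b₁₁, b₂₁, b₃₁, b₃₂, b₃₄, b₅₁, b₅₄ such that the matrix of ∇ is [[b₁₁,0,0,0,0],[b₂₁,2b₁₁,0,0,0],[b₃₁,b₃₂,3b₁₁,b₃₄,0],[0,0,0,b₁₁,0],[b₅₁,0,0,b₅₄,2b₁₁]]. -/
import Mathlib

noncomputable section

/-- The multiplication of the 5-dimensional naturally graded nilpotent associative
algebra `π₃`, given on the basis `e₁, …, e₅` (indices `0, …, 4`) by
`e₁e₁ = e₂`, `e₁e₂ = e₂e₁ = e₃`, `e₁e₄ = e₅`, `e₄e₄ = e₅`. -/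
def pi3Mul (x y : Fin 5 → ℂ) : Fin 5 → ℂ :=
  ![0, x 0 * y 0, x 0 * y 1 + x 1 * y 0, 0, x 0 * y 3 + x 3 * y 3]

/-- A derivation of `π₃`: a linear operator satisfying the Leibniz rule. -/
def IsPi3Der (D : (Fin 5 → ℂ) →ₗ[ℂ] (Fin 5 → ℂ)) : Prop :=
  ∀ x y, D (pi3Mul x y) = pi3Mul (D x) y + pi3Mul x (D y)

/-- A local derivation of `π₃`: a linear operator that agrees at every point with
some derivation (depending on the point). -/
def IsPi3LocDer (f : (Fin 5 → ℂ) →ₗ[ℂ] (Fin 5 → ℂ)) : Prop :=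
  ∀ x : Fin 5 → ℂ, ∃ D : (Fin 5 → ℂ) →ₗ[ℂ] (Fin 5 → ℂ), IsPi3Der D ∧ f x = D x

def E0 : Fin 5 → ℂ := ![1,0,0,0,0]
def E1 : Fin 5 → ℂ := ![0,1,0,0,0]
def E2 : Fin 5 → ℂ := ![0,0,1,0,0]
def E3 : Fin 5 → ℂ := ![0,0,0,1,0]
def E4 : Fin 5 → ℂ := ![0,0,0,0,1]

@[simp] lemma E0_apply (i : Fin 5) : E0 i = if i = 0 then 1 else 0 := by
  fin_cases i <;> simp [E0]
@[simp] lemma E1_apply (i : Fin 5) : E1 i = if i = 1 then 1 else 0 := by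
  fin_cases i <;> simp [E1]
@[simp] lemma E2_apply (i : Fin 5) : E2 i = if i = 2 then 1 else 0 := by
  fin_cases i <;> simp [E2]
@[simp] lemma E3_apply (i : Fin 5) : E3 i = if i = 3 then 1 else 0 := by
  fin_cases i <;> simp [E3]
@[simp] lemma E4_apply (i : Fin 5) : E4 i = if i = 4 then 1 else 0 := by
  fin_cases i <;> simp [E4]

lemma decomp (x : Fin 5 → ℂ) :
    x = x 0 • E0 + x 1 • E1 + x 2 • E2 + x 3 • E3 + x 4 • E4 := by
  funext i
  fin_cases i <;> simp

lemma lin_apply (L : (Fin 5 → ℂ) →ₗ[ℂ] (Fin 5 → ℂ)) (x : Fin 5 → ℂ) :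
    L x = x 0 • L E0 + x 1 • L E1 + x 2 • L E2 + x 3 • L E3 + x 4 • L E4 := by
  conv_lhs => rw [decomp x]
  simp [map_add, map_smul]

def derMap (a b c d e g : ℂ) : (Fin 5 → ℂ) →ₗ[ℂ] (Fin 5 → ℂ) :=
  Matrix.toLin' (!![a,0,0,0,0; b,2*a,0,0,0; c,2*b,3*a,d,0; 0,0,0,a,0; e,0,0,g,2*a] :
    Matrix (Fin 5) (Fin 5) ℂ)

lemma derMap_apply (a b c d e g : ℂ) (x : Fin 5 → ℂ) :
    derMap a b c d e g x =
      ![a * x 0, b * x 0 + 2*a * x 1, c * x 0 + 2*b * x 1 + 3*a * x 2 + d * x 3,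
        a * x 3, e * x 0 + g * x 3 + 2*a * x 4] := by
  funext i
  simp [derMap, Matrix.toLin'_apply, Matrix.mulVec, dotProduct]
  fin_cases i <;> simp [Fin.sum_univ_five] <;> ring

lemma derMap_isDer (a b c d e g : ℂ) : IsPi3Der (derMap a b c d e g) := by
  intro x y
  funext i
  fin_cases i <;> simp [derMap_apply, pi3Mul] <;> ring

lemma pm1 : pi3Mul E0 E0 = E1 := by funext i; fin_cases i <;> simp [pi3Mul]
lemma pm2 : pi3Mul E0 E1 = E2 := by funext i; fin_cases i <;> simp [pi3Mul]
lemma pm3 : pi3Mul E3 E0 = 0 := by funext i; fin_cases i <;> simp [pi3Mul]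
lemma pm4 : pi3Mul E0 E3 = E4 := by funext i; fin_cases i <;> simp [pi3Mul]
lemma pm5 : pi3Mul E3 E3 = E4 := by funext i; fin_cases i <;> simp [pi3Mul]

/-- Structure of derivations of `π₃` on the basis. -/
lemma der_cols (D : (Fin 5 → ℂ) →ₗ[ℂ] (Fin 5 → ℂ)) (hD : IsPi3Der D) :
    D E0 3 = 0 ∧
    (D E1 0 = 0 ∧ D E1 1 = 2 * D E0 0 ∧ D E1 2 = 2 * D E0 1 ∧ D E1 3 = 0 ∧ D E1 4 = 0) ∧
    (D E2 0 = 0 ∧ D E2 1 = 0 ∧ D E2 2 = 3 * D E0 0 ∧ D E2 3 = 0 ∧ D E2 4 = 0) ∧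
    (D E3 0 = 0 ∧ D E3 1 = 0 ∧ D E3 3 = D E0 0) ∧
    (D E4 0 = 0 ∧ D E4 1 = 0 ∧ D E4 2 = 0 ∧ D E4 3 = 0 ∧ D E4 4 = 2 * D E0 0) := by
  have h41 := hD E3 E0
  rw [pm3, map_zero] at h41
  have h30 : D E3 0 = 0 := by
    have h := congrFun h41 1; simp [pi3Mul] at h; linear_combination -h
  have h31 : D E3 1 = 0 := by
    have h := congrFun h41 2; simp [pi3Mul] at h; linear_combination -h
  have h03 : D E0 3 = 0 := by
    have h := congrFun h41 4; simp [pi3Mul] at h; linear_combination -h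
  have h11 := hD E0 E0
  rw [pm1] at h11
  have q0 : D E1 0 = 0 := by
    have h := congrFun h11 0; simp [pi3Mul] at h; linear_combination h
  have q1 : D E1 1 = 2 * D E0 0 := by
    have h := congrFun h11 1; simp [pi3Mul] at h; linear_combination h
  have q2 : D E1 2 = 2 * D E0 1 := by
    have h := congrFun h11 2; simp [pi3Mul] at h; linear_combination h
  have q3 : D E1 3 = 0 := by
    have h := congrFun h11 3; simp [pi3Mul] at h; linear_combination h
  have q4 : D E1 4 = 0 := by
    have h := congrFun h11 4; simp [pi3Mul] at h; linear_combination h + h03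
  have h12 := hD E0 E1
  rw [pm2] at h12
  have r0 : D E2 0 = 0 := by
    have h := congrFun h12 0; simp [pi3Mul] at h; linear_combination h
  have r1 : D E2 1 = 0 := by
    have h := congrFun h12 1; simp [pi3Mul] at h; linear_combination h + q0
  have r2 : D E2 2 = 3 * D E0 0 := by
    have h := congrFun h12 2; simp [pi3Mul] at h; linear_combination h + q1
  have r3 : D E2 3 = 0 := by
    have h := congrFun h12 3; simp [pi3Mul] at h; linear_combination h
  have r4 : D E2 4 = 0 := by
    have h := congrFun h12 4; simp [pi3Mul] at h; linear_combination h + q3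
  have h14 := hD E0 E3
  rw [pm4] at h14
  have h44 := hD E3 E3
  rw [pm5] at h44
  have h33 : D E3 3 = D E0 0 := by
    have t1 := congrFun h14 4; have t2 := congrFun h44 4
    simp [pi3Mul] at t1 t2
    linear_combination t1 - t2 + h03 - h30
  have s0 : D E4 0 = 0 := by
    have h := congrFun h44 0; simp [pi3Mul] at h; linear_combination h
  have s1 : D E4 1 = 0 := by
    have h := congrFun h44 1; simp [pi3Mul] at h; linear_combination h
  have s2 : D E4 2 = 0 := by
    have h := congrFun h44 2; simp [pi3Mul] at h; linear_combination h
  have s3 : D E4 3 = 0 := by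
    have h := congrFun h44 3; simp [pi3Mul] at h; linear_combination h
  have s4 : D E4 4 = 2 * D E0 0 := by
    have h := congrFun h44 4; simp [pi3Mul] at h; linear_combination h + h30 + 2 * h33
  exact ⟨h03, ⟨q0, q1, q2, q3, q4⟩, ⟨r0, r1, r2, r3, r4⟩, ⟨h30, h31, h33⟩,
    ⟨s0, s1, s2, s3, s4⟩⟩

theorem pi3_locDer_iff (f : (Fin 5 → ℂ) →ₗ[ℂ] (Fin 5 → ℂ)) :
    IsPi3LocDer f ↔
      ∃ b11 b21 b31 b32 b34 b51 b54 : ℂ,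
        LinearMap.toMatrix' f =
          !![b11, 0, 0, 0, 0;
             b21, 2 * b11, 0, 0, 0;
             b31, b32, 3 * b11, b34, 0;
             0, 0, 0, b11, 0;
             b51, 0, 0, b54, 2 * b11] := by
  constructor
  · intro hf
    obtain ⟨D1, hD1, hx1⟩ := hf E0
    obtain ⟨h03, -, -, -, -⟩ := der_cols D1 hD1
    have a1 : f E0 3 = 0 := by rw [hx1]; exact h03
    obtain ⟨D2, hD2, hx2⟩ := hf E1
    obtain ⟨-, ⟨u0, -, -, u3, u4⟩, -, -, -⟩ := der_cols D2 hD2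
    have b0 : f E1 0 = 0 := by rw [hx2]; exact u0
    have b3 : f E1 3 = 0 := by rw [hx2]; exact u3
    have b4 : f E1 4 = 0 := by rw [hx2]; exact u4
    obtain ⟨D3, hD3, hx3⟩ := hf E2
    obtain ⟨-, -, ⟨v0, v1, -, v3, v4⟩, -, -⟩ := der_cols D3 hD3
    have c0 : f E2 0 = 0 := by rw [hx3]; exact v0
    have c1 : f E2 1 = 0 := by rw [hx3]; exact v1
    have c3 : f E2 3 = 0 := by rw [hx3]; exact v3
    have c4 : f E2 4 = 0 := by rw [hx3]; exact v4
    obtain ⟨D4, hD4, hx4⟩ := hf E3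
    obtain ⟨-, -, -, ⟨w0, w1, -⟩, -⟩ := der_cols D4 hD4
    have d0 : f E3 0 = 0 := by rw [hx4]; exact w0
    have d1 : f E3 1 = 0 := by rw [hx4]; exact w1
    obtain ⟨D5, hD5, hx5⟩ := hf E4
    obtain ⟨-, -, -, -, ⟨y0, y1, y2, y3, -⟩⟩ := der_cols D5 hD5
    have g0 : f E4 0 = 0 := by rw [hx5]; exact y0
    have g1 : f E4 1 = 0 := by rw [hx5]; exact y1
    have g2 : f E4 2 = 0 := by rw [hx5]; exact y2
    have g3 : f E4 3 = 0 := by rw [hx5]; exact y3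
    -- x = e1 + e4 : f e4 3 = f e1 0
    obtain ⟨D6, hD6, hx6⟩ := hf (E0 + E3)
    obtain ⟨k03, -, -, ⟨k0, -, k3⟩, -⟩ := der_cols D6 hD6
    have r1 : f E3 3 = f E0 0 := by
      have t0 := congrFun hx6 0
      have t3 := congrFun hx6 3
      simp [map_add] at t0 t3
      linear_combination (t3 - a1 + k03 + k3) - (t0 - d0 + k0)
    -- x = e2 + e4 : f e2 1 = 2 * f e1 0
    obtain ⟨D7, hD7, hx7⟩ := hf (E1 + E3)
    obtain ⟨-, ⟨-, m11, -, m13, -⟩, -, ⟨-, m31, m33⟩, -⟩ := der_cols D7 hD7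
    have r2 : f E1 1 = 2 * f E0 0 := by
      have t1 := congrFun hx7 1
      have t3 := congrFun hx7 3
      simp [map_add] at t1 t3
      linear_combination t1 + m11 + m31 - d1 - 2 * t3 + 2 * b3 - 2 * m13 - 2 * m33 + 2 * r1
    -- x = e2 + e5 : f e5 4 = 2 * f e1 0
    obtain ⟨D8, hD8, hx8⟩ := hf (E1 + E4)
    obtain ⟨-, ⟨-, n11, -, -, n14⟩, -, -, ⟨-, n41, -, -, n44⟩⟩ := der_cols D8 hD8
    have r3 : f E4 4 = 2 * f E0 0 := by
      have t1 := congrFun hx8 1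
      have t4 := congrFun hx8 4
      simp [map_add] at t1 t4
      linear_combination (t4 - b4 + n14 + n44) - (t1 - g1 + n41 + n11) + r2
    -- x = e3 + e5 : f e3 2 = 3 * f e1 0
    obtain ⟨D9, hD9, hx9⟩ := hf (E2 + E4)
    obtain ⟨-, -, ⟨-, -, p22, -, p24⟩, -, ⟨-, -, p42, -, p44⟩⟩ := der_cols D9 hD9
    have r4 : f E2 2 = 3 * f E0 0 := by
      have t2 := congrFun hx9 2
      have t4 := congrFun hx9 4
      simp [map_add] at t2 t4
      linear_combination t2 - g2 + p42 + p22 - (3/2) * (t4 - c4 + p24 + p44 - r3)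
    refine ⟨f E0 0, f E0 1, f E0 2, f E1 2, f E3 2, f E0 4, f E3 4, ?_⟩
    have hf' : f = Matrix.toLin'
        !![f E0 0, 0, 0, 0, 0;
           f E0 1, 2 * f E0 0, 0, 0, 0;
           f E0 2, f E1 2, 3 * f E0 0, f E3 2, 0;
           0, 0, 0, f E0 0, 0;
           f E0 4, 0, 0, f E3 4, 2 * f E0 0] := by
      apply LinearMap.ext; intro x
      rw [lin_apply f x]
      funext i
      fin_cases i <;>
        simp [Matrix.toLin'_apply, Matrix.mulVec, dotProduct, Fin.sum_univ_five,
          a1, b0, b3, b4, c0, c1, c3, c4, d0, d1, g0, g1, g2, g3, r1, r2, r3, r4] <;>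
        ring
    conv_lhs => rw [hf']
    exact LinearMap.toMatrix'_toLin' _
  · rintro ⟨b11, b21, b31, b32, b34, b51, b54, hM⟩
    have hf : f = Matrix.toLin' !![b11, 0, 0, 0, 0; b21, 2 * b11, 0, 0, 0;
        b31, b32, 3 * b11, b34, 0; 0, 0, 0, b11, 0; b51, 0, 0, b54, 2 * b11] := by
      rw [← hM, Matrix.toLin'_toMatrix']
    have hfx : ∀ x : Fin 5 → ℂ, f x =
        ![b11 * x 0, b21 * x 0 + 2*b11 * x 1,
          b31 * x 0 + b32 * x 1 + 3*b11 * x 2 + b34 * x 3,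
          b11 * x 3, b51 * x 0 + b54 * x 3 + 2*b11 * x 4] := by
      intro x
      rw [hf]
      funext i
      simp [Matrix.toLin'_apply, Matrix.mulVec, dotProduct]
      fin_cases i <;> simp [Fin.sum_univ_five] <;> ring
    intro x
    by_cases h0 : x 0 = 0
    · refine ⟨derMap b11 (b32/2) 0 b34 b51 b54, derMap_isDer _ _ _ _ _ _, ?_⟩
      rw [hfx, derMap_apply]
      funext i
      fin_cases i <;>
        simp only [Matrix.cons_val_zero, Matrix.cons_val_one, Matrix.head_cons,
          Matrix.cons_val_two, Matrix.tail_cons, Matrix.cons_val_three,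
          Matrix.cons_val_four, Matrix.cons_val_succ] <;>
        rw [h0] <;> ring
    · refine ⟨derMap b11 b21 (b31 + (b32 - 2*b21) * x 1 / x 0) b34 b51 b54,
        derMap_isDer _ _ _ _ _ _, ?_⟩
      rw [hfx, derMap_apply]
      funext i
      fin_cases i <;>
        simp only [Matrix.cons_val_zero, Matrix.cons_val_one, Matrix.head_cons,
          Matrix.cons_val_two, Matrix.tail_cons, Matrix.cons_val_three,
          Matrix.cons_val_four, Matrix.cons_val_succ] <;>
        field_simp <;> ring
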